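/- arXiv:1206.1468 — 6 statements merged into one kernel-verified Lean document; each statement's English description precedes it below -/
import Mathlib

section
/- For every x > 1, F(log x) = (log p_d)/(d-1) + log x + Σ_{i=0}^∞ d^{-(i+1)} Q(f_i(x)), where Q(x) := log(f(x) x^{-d} / p_d), and the series converges absolutely. -/
open Filter Finset

theorem free_energy_series_representation
    (d : ℕ) (p : ℕ → ℝ) (f : ℝ → ℝ) (w : ℝ) (F : ℝ → ℝ) (Q : ℝ → ℝ)
    (hd : 2 ≤ d)
    (hp : ∀ i, i ≤ d → 0 ≤ p i)
    (hsum : ∑ i ∈ Finset.range (d + 1), p i = 1)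
    (hpd : 0 < p d)
    (hf : ∀ x, f x = ∑ i ∈ Finset.range (d + 1), p i * x ^ i)
    (hw : w = ∑ i ∈ Finset.range (d + 1), (i : ℝ) * p i)
    (hw1 : 1 < w)
    (hQ : ∀ y : ℝ, Q y = Real.log (f y * y ^ (-(d : ℤ)) / p d))
    (hF : ∀ x : ℝ, 1 < x →
      Tendsto (fun n : ℕ => (d : ℝ) ^ (-(n : ℤ)) * Real.log (f^[n] x))
        atTop (nhds (F (Real.log x)))) :
    ∀ x : ℝ, 1 < x →
      Summable (fun i : ℕ => (d : ℝ) ^ (-((i : ℤ) + 1)) * |Q (f^[i] x)|) ∧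
      F (Real.log x)
        = Real.log (p d) / (d - 1) + Real.log x
          + ∑' i : ℕ, (d : ℝ) ^ (-((i : ℤ) + 1)) * Q (f^[i] x) := by
  intro x hx
  have hd1 : (1:ℝ) < d := by
    have : (2:ℝ) ≤ d := by exact_mod_cast hd
    linarith
  have hd0 : (0:ℝ) < d := by linarith
  have hdz : (d:ℝ) ≠ 0 := ne_of_gt hd0
  have hdmem : d ∈ Finset.range (d+1) := by simp
  have hpd1 : p d ≤ 1 := by
    rw [← hsum]
    exact Finset.single_le_sum
      (fun i hi => hp i (by have := Finset.mem_range.mp hi; omega)) hdmem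
  -- f maps (1,∞) into (1,∞)
  have h1 : ∀ y : ℝ, 1 < y → 1 < f y := by
    intro y hy
    rw [hf]
    have h := Finset.sum_lt_sum
      (f := fun i => p i * 1) (g := fun i => p i * y ^ i)
      (s := Finset.range (d+1))
      (fun i hi => by
        have hpi := hp i (by have := Finset.mem_range.mp hi; omega)
        have : (1:ℝ) ≤ y ^ i := one_le_pow₀ hy.le
        show p i * 1 ≤ p i * y ^ i
        nlinarith [mul_nonneg hpi (sub_nonneg.mpr this)])
      ⟨d, hdmem, by
        have : (1:ℝ) < y ^ d := one_lt_pow₀ hy (by omega)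
        show p d * 1 < p d * y ^ d
        nlinarith [mul_pos hpd (sub_pos.mpr this)]⟩
    calc (1:ℝ) = ∑ i ∈ Finset.range (d+1), p i * 1 := by
          simp [hsum]
      _ < _ := h
  have hiter : ∀ n : ℕ, 1 < f^[n] x := by
    intro n
    induction n with
    | zero => simpa using hx
    | succ n ih => rw [Function.iterate_succ_apply']; exact h1 _ ih
  -- bounds on f
  have hlow : ∀ y : ℝ, 1 < y → p d * y ^ d ≤ f y := by
    intro y hy
    have hy0 : (0:ℝ) < y := by linarith
    rw [hf]
    exact Finset.single_le_sum
      (f := fun i => p i * y ^ i)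
      (fun i hi => by
        have hpi := hp i (by have := Finset.mem_range.mp hi; omega)
        positivity) hdmem
  have hupp : ∀ y : ℝ, 1 < y → f y ≤ y ^ d := by
    intro y hy
    rw [hf]
    calc ∑ i ∈ Finset.range (d+1), p i * y ^ i
        ≤ ∑ i ∈ Finset.range (d+1), p i * y ^ d := by
          apply Finset.sum_le_sum
          intro i hi
          have hpi := hp i (by have := Finset.mem_range.mp hi; omega)
          have : y ^ i ≤ y ^ d :=
            pow_le_pow_right₀ hy.le (by have := Finset.mem_range.mp hi; omega)
          nlinarith
      _ = y ^ d := by rw [← Finset.sum_mul, hsum, one_mul]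
  -- Q bounds
  have hQbd : ∀ y : ℝ, 1 < y → 0 ≤ Q y ∧ Q y ≤ -Real.log (p d) := by
    intro y hy
    have hy0 : (0:ℝ) < y := by linarith
    have hyd : (0:ℝ) < y ^ d := pow_pos hy0 d
    have hfy : 0 < f y := lt_trans one_pos (h1 y hy)
    have hrw : f y * y ^ (-(d:ℤ)) / p d = f y / (y ^ d * p d) := by
      rw [zpow_neg, zpow_natCast, div_eq_mul_inv, div_eq_mul_inv, mul_inv, mul_assoc]
    have ht1 : 1 ≤ f y * y ^ (-(d:ℤ)) / p d := by
      rw [hrw, le_div_iff₀ (mul_pos hyd hpd), one_mul]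
      have := hlow y hy
      linarith [hlow y hy]
    have ht2 : f y * y ^ (-(d:ℤ)) / p d ≤ (p d)⁻¹ := by
      rw [hrw, div_le_iff₀ (mul_pos hyd hpd)]
      have : (p d)⁻¹ * (y ^ d * p d) = y ^ d := by
        field_simp
      rw [this]
      exact hupp y hy
    constructor
    · rw [hQ]; exact Real.log_nonneg ht1
    · rw [hQ]
      calc Real.log (f y * y ^ (-(d:ℤ)) / p d)
          ≤ Real.log (p d)⁻¹ := Real.log_le_log (by linarith) ht2
        _ = -Real.log (p d) := Real.log_inv _
  -- key recurrence for log f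
  have hflog : ∀ y : ℝ, 1 < y →
      Real.log (f y) = d * Real.log y + Real.log (p d) + Q y := by
    intro y hy
    have hy0 : (0:ℝ) < y := by linarith
    have hfy : 0 < f y := lt_trans one_pos (h1 y hy)
    have hz : y ^ (-(d:ℤ)) ≠ 0 := by
      apply zpow_ne_zero; exact ne_of_gt hy0
    have := hQ y
    rw [Real.log_div (by exact mul_ne_zero (ne_of_gt hfy) hz) (ne_of_gt hpd),
        Real.log_mul (ne_of_gt hfy) hz, Real.log_zpow] at this
    push_cast at this
    linarith
  -- series terms
  set g : ℕ → ℝ := fun i => (d:ℝ) ^ (-((i:ℤ)+1)) * (Real.log (p d) + Q (f^[i] x)) with hg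
  -- partial-sum identity
  have hkey : ∀ n : ℕ, (d:ℝ) ^ (-(n:ℤ)) * Real.log (f^[n] x)
      = Real.log x + ∑ i ∈ Finset.range n, g i := by
    intro n
    induction n with
    | zero => simp
    | succ n ih =>
      have e1 : (d:ℝ) ^ (-((n:ℤ)+1)) * (d:ℝ) = (d:ℝ) ^ (-(n:ℤ)) := by
        rw [neg_add, zpow_add₀ hdz, zpow_neg_one, mul_assoc,
            inv_mul_cancel₀ hdz, mul_one]
      rw [Function.iterate_succ_apply', Finset.sum_range_succ,
          hflog _ (hiter n)]
      simp only [hg]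
      push_cast
      linear_combination ih + Real.log (f^[n] x) * e1
  -- geometric setup
  set r : ℝ := (d:ℝ)⁻¹ with hr
  have hr0 : 0 ≤ r := by positivity
  have hr1 : r < 1 := by
    rw [hr, inv_lt_one_iff₀]; right; exact hd1
  have hpow : ∀ i : ℕ, (d:ℝ) ^ (-((i:ℤ)+1)) = r ^ (i+1) := by
    intro i
    rw [show -((i:ℤ)+1) = -(((i+1:ℕ)):ℤ) by push_cast; ring,
        zpow_neg, zpow_natCast, hr, inv_pow]
  have hgeo : Summable fun i : ℕ => r ^ (i+1) := by
    have h := (summable_geometric_of_lt_one hr0 hr1).mul_left r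
    exact h.congr (fun i => by ring)
  -- summability of |Q| series
  have hnn : ∀ i : ℕ, 0 ≤ (d:ℝ) ^ (-((i:ℤ)+1)) * |Q (f^[i] x)| := by
    intro i; positivity
  have hbd : ∀ i : ℕ, (d:ℝ) ^ (-((i:ℤ)+1)) * |Q (f^[i] x)|
      ≤ r ^ (i+1) * (-Real.log (p d)) := by
    intro i
    rw [hpow]
    have hq := hQbd (f^[i] x) (hiter i)
    have habs : |Q (f^[i] x)| ≤ -Real.log (p d) := by
      rw [abs_of_nonneg hq.1]; exact hq.2
    exact mul_le_mul_of_nonneg_left habs (pow_nonneg hr0 _)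
  have hSabs : Summable (fun i : ℕ => (d:ℝ) ^ (-((i:ℤ)+1)) * |Q (f^[i] x)|) :=
    Summable.of_nonneg_of_le hnn hbd (hgeo.mul_right (-Real.log (p d)))
  refine ⟨hSabs, ?_⟩
  -- summability of Q series and constant series
  have hSQ : Summable (fun i : ℕ => (d:ℝ) ^ (-((i:ℤ)+1)) * Q (f^[i] x)) := by
    apply Summable.of_abs
    have heq : (fun i : ℕ => |(d:ℝ) ^ (-((i:ℤ)+1)) * Q (f^[i] x)|)
        = fun i : ℕ => (d:ℝ) ^ (-((i:ℤ)+1)) * |Q (f^[i] x)| := by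
      funext i
      rw [abs_mul, abs_of_nonneg (by positivity)]
    rw [heq]
    exact hSabs
  have hSC : Summable (fun i : ℕ => (d:ℝ) ^ (-((i:ℤ)+1)) * Real.log (p d)) := by
    apply (hgeo.mul_right (Real.log (p d))).congr
    intro i
    rw [hpow]
  have hSg : Summable g := by
    apply (hSC.add hSQ).congr
    intro i
    rw [hg]
    ring
  -- limit identification
  have hlim : Tendsto (fun n : ℕ => (d:ℝ) ^ (-(n:ℤ)) * Real.log (f^[n] x))
      atTop (nhds (Real.log x + ∑' i, g i)) := by
    have h := hSg.hasSum.tendsto_sum_nat.const_add (Real.log x)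
    exact h.congr (fun n => (hkey n).symm)
  have hFeq : F (Real.log x) = Real.log x + ∑' i, g i :=
    tendsto_nhds_unique (hF x hx) hlim
  -- compute the tsum of the constant part
  have htsumC : ∑' i : ℕ, (d:ℝ) ^ (-((i:ℤ)+1)) * Real.log (p d)
      = Real.log (p d) / ((d:ℝ) - 1) := by
    have h1 : ∑' i : ℕ, (d:ℝ) ^ (-((i:ℤ)+1)) * Real.log (p d)
        = (∑' i : ℕ, r ^ (i+1)) * Real.log (p d) := by
      rw [← tsum_mul_right]
      exact tsum_congr (fun i => by rw [hpow])
    have h2 : ∑' i : ℕ, r ^ (i+1) = r * (1 - r)⁻¹ := by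
      have : ∀ i : ℕ, r ^ (i+1) = r * r ^ i := fun i => by ring
      rw [tsum_congr this, tsum_mul_left, tsum_geometric_of_lt_one hr0 hr1]
    rw [h1, h2]
    have hdm1 : (d:ℝ) - 1 ≠ 0 := by linarith
    rw [hr]
    field_simp
  have hsplit : ∑' i, g i
      = Real.log (p d) / ((d:ℝ) - 1)
        + ∑' i : ℕ, (d:ℝ) ^ (-((i:ℤ)+1)) * Q (f^[i] x) := by
    rw [hg]
    have : ∀ i : ℕ, (d:ℝ) ^ (-((i:ℤ)+1)) * (Real.log (p d) + Q (f^[i] x))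
        = (d:ℝ) ^ (-((i:ℤ)+1)) * Real.log (p d)
          + (d:ℝ) ^ (-((i:ℤ)+1)) * Q (f^[i] x) := fun i => by ring
    rw [tsum_congr this, Summable.tsum_add hSC hSQ, htsumC]
  rw [hFeq, hsplit]
  ring
end

section
/- The free energy F satisfies F(h) ~ h as h → ∞, i.e. lim_{h→∞} F(h)/h = 1. -/
/-!
On `[1, ∞)` the generating function satisfies `1 ≤ f x` and `p_d x^d ≤ f x ≤ x^d`. In logarithmic
variables `uₙ = log fⁿ(x)` this reads `d uₙ + log p_d ≤ uₙ₊₁ ≤ d uₙ`, so `d⁻ⁿ uₙ` stays between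
`log x + log p_d / (d - 1)` and `log x`. Hence `h + log p_d / (d - 1) ≤ F h ≤ h` for `h ≥ 0`.
-/

open Filter Finset Real Topology

section Recurrence

variable {d a : ℝ} {u : ℕ → ℝ}

theorem le_pow_mul_of_le_mul (hd : 0 ≤ d) (hu : ∀ n, u (n + 1) ≤ d * u n) (n : ℕ) :
    u n ≤ d ^ n * u 0 := by
  induction n with
  | zero => simp
  | succ n ih =>
    calc u (n + 1) ≤ d * u n := hu n
      _ ≤ d * (d ^ n * u 0) := mul_le_mul_of_nonneg_left ih hd
      _ = d ^ (n + 1) * u 0 := by ring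

/-- Shifting by `a / (d - 1)` moves the fixed point of `t ↦ d t + a` to the origin. -/
theorem pow_mul_le_of_mul_add_le (hd : 0 ≤ d) (hd₁ : d ≠ 1) (hu : ∀ n, d * u n + a ≤ u (n + 1))
    (n : ℕ) : d ^ n * (u 0 + a / (d - 1)) ≤ u n + a / (d - 1) := by
  have hfix : a + a / (d - 1) = d * (a / (d - 1)) := by
    field_simp [sub_ne_zero.mpr hd₁]
    ring
  induction n with
  | zero => simp
  | succ n ih =>
    calc d ^ (n + 1) * (u 0 + a / (d - 1)) = d * (d ^ n * (u 0 + a / (d - 1))) := by ring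
      _ ≤ d * (u n + a / (d - 1)) := mul_le_mul_of_nonneg_left ih hd
      _ = d * u n + a + a / (d - 1) := by rw [mul_add, ← hfix]; ring
      _ ≤ u (n + 1) + a / (d - 1) := by linarith [hu n]

end Recurrence

theorem tendsto_div_self_of_le_of_le {F : ℝ → ℝ} {C C' : ℝ} (hlow : ∀ᶠ h in atTop, h + C ≤ F h)
    (hup : ∀ᶠ h in atTop, F h ≤ h + C') : Tendsto (fun h => F h / h) atTop (𝓝 1) := by
  have hlim : ∀ K : ℝ, Tendsto (fun h : ℝ => 1 + K / h) atTop (𝓝 1) := fun K => by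
    simpa using (tendsto_const_nhds (x := (1 : ℝ))).add
      ((tendsto_const_nhds (x := K)).div_atTop tendsto_id)
  refine tendsto_of_tendsto_of_tendsto_of_le_of_le' (hlim C) (hlim C') ?_ ?_
  · filter_upwards [hlow, eventually_gt_atTop 0] with h hF hh
    rw [one_add_div hh.ne']
    exact div_le_div_of_nonneg_right (by linarith) hh.le
  · filter_upwards [hup, eventually_gt_atTop 0] with h hF hh
    rw [one_add_div hh.ne']
    exact div_le_div_of_nonneg_right (by linarith) hh.le

section Polynomial

variable {d : ℕ} {p : ℕ → ℝ} {x : ℝ}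

theorem mul_pow_le_sum_mul_pow (hp : ∀ i, i ≤ d → 0 ≤ p i) (hx : 0 ≤ x) :
    p d * x ^ d ≤ ∑ i ∈ range (d + 1), p i * x ^ i :=
  single_le_sum (f := fun i => p i * x ^ i)
    (fun i hi => mul_nonneg (hp i (Nat.lt_succ_iff.mp (mem_range.mp hi))) (pow_nonneg hx i))
    (self_mem_range_succ d)

theorem one_le_sum_mul_pow (hp : ∀ i, i ≤ d → 0 ≤ p i)
    (hsum : ∑ i ∈ range (d + 1), p i = 1) (hx : 1 ≤ x) :
    1 ≤ ∑ i ∈ range (d + 1), p i * x ^ i := by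
  rw [← hsum]
  refine sum_le_sum fun i hi => ?_
  exact le_mul_of_one_le_right (hp i (Nat.lt_succ_iff.mp (mem_range.mp hi))) (one_le_pow₀ hx)

theorem sum_mul_pow_le_pow (hp : ∀ i, i ≤ d → 0 ≤ p i)
    (hsum : ∑ i ∈ range (d + 1), p i = 1) (hx : 1 ≤ x) :
    ∑ i ∈ range (d + 1), p i * x ^ i ≤ x ^ d :=
  calc ∑ i ∈ range (d + 1), p i * x ^ i ≤ ∑ i ∈ range (d + 1), p i * x ^ d := by
        refine sum_le_sum fun i hi => ?_
        have hi : i ≤ d := Nat.lt_succ_iff.mp (mem_range.mp hi)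
        exact mul_le_mul_of_nonneg_left (pow_le_pow_right₀ hx hi) (hp i hi)
    _ = x ^ d := by rw [← sum_mul, hsum, one_mul]

end Polynomial

section Iterate

variable {f : ℝ → ℝ} {c : ℝ} {d : ℕ} {x : ℝ}

theorem one_le_iterate (hf : ∀ y, 1 ≤ y → 1 ≤ f y) (hx : 1 ≤ x) (n : ℕ) : 1 ≤ f^[n] x := by
  induction n with
  | zero => exact hx
  | succ n ih => rw [Function.iterate_succ_apply']; exact hf _ ih

theorem log_iterate_le (hf : ∀ y, 1 ≤ y → 1 ≤ f y) (hup : ∀ y, 1 ≤ y → f y ≤ y ^ d)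
    (hx : 1 ≤ x) (n : ℕ) : log (f^[n] x) ≤ d ^ n * log x := by
  refine le_pow_mul_of_le_mul (u := fun n => log (f^[n] x)) d.cast_nonneg (fun n => ?_) n
  have hy := one_le_iterate hf hx n
  rw [Function.iterate_succ_apply', ← log_pow]
  exact log_le_log (by linarith [hf _ hy]) (hup _ hy)

theorem pow_mul_le_log_iterate (hd : 1 < d) (hc : 0 < c) (hf : ∀ y, 1 ≤ y → 1 ≤ f y)
    (hlow : ∀ y, 1 ≤ y → c * y ^ d ≤ f y) (hup : ∀ y, 1 ≤ y → f y ≤ y ^ d) (hx : 1 ≤ x)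
    (n : ℕ) : d ^ n * (log x + log c / (d - 1)) ≤ log (f^[n] x) := by
  have hd' : (1 : ℝ) < d := by exact_mod_cast hd
  have hc₁ : c ≤ 1 := by simpa using (hlow 1 le_rfl).trans (hup 1 le_rfl)
  have hshift : log c / (d - 1) ≤ 0 := div_nonpos_of_nonpos_of_nonneg (log_nonpos hc.le hc₁)
    (by linarith)
  have hrec : ∀ n, d * log (f^[n] x) + log c ≤ log (f^[n + 1] x) := fun n => by
    have hy := one_le_iterate hf hx n
    rw [Function.iterate_succ_apply', add_comm, ← log_pow, ← log_mul hc.ne' (by positivity)]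
    exact log_le_log (by positivity) (hlow _ hy)
  have := pow_mul_le_of_mul_add_le (u := fun n => log (f^[n] x)) d.cast_nonneg hd'.ne' hrec n
  simp only [Function.iterate_zero, id] at this
  linarith

theorem mem_Icc_of_tendsto_zpow_mul_log_iterate (hd : 1 < d) (hc : 0 < c)
    (hf : ∀ y, 1 ≤ y → 1 ≤ f y) (hlow : ∀ y, 1 ≤ y → c * y ^ d ≤ f y)
    (hup : ∀ y, 1 ≤ y → f y ≤ y ^ d) {h L : ℝ} (hh : 0 ≤ h)
    (hL : Tendsto (fun n : ℕ => (d : ℝ) ^ (-(n : ℤ)) * log (f^[n] (exp h))) atTop (𝓝 L)) :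
    L ∈ Set.Icc (h + log c / (d - 1)) h := by
  have hx : 1 ≤ exp h := one_le_exp hh
  have hdn : ∀ n : ℕ, (d : ℝ) ^ (-(n : ℤ)) = ((d : ℝ) ^ n)⁻¹ := fun n => by
    rw [zpow_neg, zpow_natCast]
  have hpos : ∀ n : ℕ, (0 : ℝ) < (d : ℝ) ^ n := fun n => by positivity
  constructor
  · refine ge_of_tendsto hL (Eventually.of_forall fun n => ?_)
    rw [hdn, le_inv_mul_iff₀ (hpos n)]
    simpa using pow_mul_le_log_iterate hd hc hf hlow hup hx n
  · refine le_of_tendsto hL (Eventually.of_forall fun n => ?_)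
    rw [hdn, inv_mul_le_iff₀ (hpos n)]
    simpa using log_iterate_le hf hup hx n

end Iterate

theorem free_energy_asymptotically_linear_general
    (d : ℕ) (p : ℕ → ℝ) (f : ℝ → ℝ) (F : ℝ → ℝ)
    (hd : 2 ≤ d)
    (hp : ∀ i, i ≤ d → 0 ≤ p i)
    (hsum : ∑ i ∈ Finset.range (d + 1), p i = 1)
    (hpd : 0 < p d)
    (hf : ∀ x, f x = ∑ i ∈ Finset.range (d + 1), p i * x ^ i)
    (hF : ∀ h : ℝ,
      Tendsto (fun n : ℕ => (d : ℝ) ^ (-(n : ℤ)) * Real.log (f^[n] (Real.exp h)))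
        atTop (nhds (F h))) :
    Tendsto (fun h : ℝ => F h / h) atTop (nhds 1) := by
  have hbounds : ∀ h, 0 ≤ h → F h ∈ Set.Icc (h + log (p d) / (d - 1)) h := fun h hh =>
    mem_Icc_of_tendsto_zpow_mul_log_iterate hd hpd
      (fun y hy => (hf y).symm ▸ one_le_sum_mul_pow hp hsum hy)
      (fun y hy => (hf y).symm ▸ mul_pow_le_sum_mul_pow hp (by linarith))
      (fun y hy => (hf y).symm ▸ sum_mul_pow_le_pow hp hsum hy) hh (hF h)
  refine tendsto_div_self_of_le_of_le (C := log (p d) / (d - 1)) (C' := 0) ?_ ?_ <;>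
    filter_upwards [eventually_ge_atTop 0] with h hh
  · exact (hbounds h hh).1
  · simpa using (hbounds h hh).2

theorem free_energy_asymptotically_linear
    (d : ℕ) (p : ℕ → ℝ) (f : ℝ → ℝ) (w : ℝ) (F : ℝ → ℝ)
    (hd : 2 ≤ d)
    (hp : ∀ i, i ≤ d → 0 ≤ p i)
    (hsum : ∑ i ∈ Finset.range (d + 1), p i = 1)
    (hpd : 0 < p d)
    (hf : ∀ x, f x = ∑ i ∈ Finset.range (d + 1), p i * x ^ i)
    (hw : w = ∑ i ∈ Finset.range (d + 1), (i : ℝ) * p i)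
    (hw1 : 1 < w)
    (hF : ∀ h : ℝ,
      Tendsto (fun n : ℕ => (d : ℝ) ^ (-(n : ℤ)) * Real.log (f^[n] (Real.exp h)))
        atTop (nhds (F h))) :
    Tendsto (fun h : ℝ => F h / h) atTop (nhds 1) :=
  free_energy_asymptotically_linear_general d p f F hd hp hsum hpd hf hF
end

section
/- Under the assumptions above, F(h) ~ h^γ L(log h) as h ↓ 0, i.e. lim_{h↓0} F(h)/(h^γ L(log h)) = 1, where L(log s) = s^{-γ} F(log ψ(s)) is the (continuous, log w-periodic, positive) Harris function. -/
/-! The definition of `L` says `F (log ψ(s)) = s ^ γ * L (log s)`, so the substitution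
`h = log ψ(s)` turns the quotient into `(s / log ψ(s)) ^ γ * L (log s) / L (log (log ψ(s)))`.
Since `log ψ(s) ~ ψ(s) - 1 ~ s`, the first factor tends to `1` and the two arguments of `L`
differ by `o(1)`; a continuous periodic function is uniformly continuous, so the second factor
tends to `1` as well. The substitution is legitimate because `s ↦ log ψ(s)` is continuous,
vanishes at `0` and is positive just to the right of it, so by the intermediate value theorem
it maps right neighbourhoods of `0` onto right neighbourhoods of `0`. -/
open Filter Set Topology Asymptotics

theorem Function.Periodic.uniformContinuous {β : Type*} [UniformSpace β] {L : ℝ → β} {c : ℝ}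
    (hper : Function.Periodic L c) (hc : c ≠ 0) (hL : Continuous L) : UniformContinuous L := by
  obtain ⟨p, hp, hperp⟩ : ∃ p, 0 < p ∧ Function.Periodic L p := by
    rcases hc.lt_or_gt with h | h
    exacts [⟨-c, neg_pos.2 h, hper.neg⟩, ⟨c, h, hper⟩]
  have : Fact (0 < p) := ⟨hp⟩
  have hlift : Continuous hperp.lift := hL.quotient_liftOn' _
  exact (CompactSpace.uniformContinuous_of_continuous (α := AddCircle p) hlift).comp
    (uniformContinuous_addMonoidHom_of_continuous (f := QuotientAddGroup.mk' _)
      continuous_quotient_mk')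

theorem UniformContinuous.tendsto_sub_comp_of_tendsto_sub {α G H : Type*} [UniformSpace G]
    [AddGroup G] [IsUniformAddGroup G] [UniformSpace H] [AddGroup H] [IsUniformAddGroup H]
    {u : G → H} (hu : UniformContinuous u) {l : Filter α} {a b : α → G}
    (hab : Tendsto (fun x => a x - b x) l (𝓝 0)) :
    Tendsto (fun x => u (a x) - u (b x)) l (𝓝 0) := by
  have h : Tendsto (fun x => (b x, a x)) l (uniformity G) := by
    rwa [uniformity_eq_comap_nhds_zero G, tendsto_comap_iff]
  have := Tendsto.comp hu h
  rwa [uniformity_eq_comap_nhds_zero H, tendsto_comap_iff] at this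

theorem Function.Periodic.tendsto_div_comp_of_tendsto_sub {α : Type*} {L : ℝ → ℝ} {c : ℝ}
    (hper : Function.Periodic L c) (hc : c ≠ 0) (hL : Continuous L) (hpos : ∀ t, 0 < L t)
    {l : Filter α} {a b : α → ℝ} (hab : Tendsto (fun x => a x - b x) l (𝓝 0)) :
    Tendsto (fun x => L (a x) / L (b x)) l (𝓝 1) := by
  have hlogL : UniformContinuous (fun t => Real.log (L t)) :=
    (hper.comp Real.log).uniformContinuous hc (hL.log fun t => (hpos t).ne')
  have := (hlogL.tendsto_sub_comp_of_tendsto_sub hab).rexp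
  rw [Real.exp_zero] at this
  refine this.congr fun x => ?_
  rw [← Real.log_div (hpos _).ne' (hpos _).ne', Real.exp_log (div_pos (hpos _) (hpos _))]

theorem Real.isEquivalent_log_of_tendsto_one {α : Type*} {l : Filter α} {u : α → ℝ}
    (hu : Tendsto u l (𝓝 1)) : (fun x => Real.log (u x)) ~[l] fun x => u x - 1 := by
  have h : Real.log ~[𝓝 1] fun y => y - 1 := by
    have := (Real.hasDerivAt_log one_ne_zero).isLittleO
    simp only [Real.log_one, sub_zero, smul_eq_mul, inv_one, mul_one] at this
    exact this
  exact h.comp_tendsto hu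

theorem nhdsGT_le_map_of_continuousOn {g : ℝ → ℝ} {a b : ℝ} (hab : a < b)
    (hg : ContinuousOn g (Icc a b)) (hpos : ∀ᶠ s in 𝓝[>] a, g a < g s) :
    𝓝[>] (g a) ≤ map g (𝓝[>] a) := by
  intro A hA
  obtain ⟨u, hu, hsub⟩ := mem_nhdsGT_iff_exists_Ioo_subset.mp (inter_mem hA hpos)
  obtain ⟨c, hac, hcu, hcb⟩ : ∃ c, a < c ∧ c < u ∧ c ≤ b :=
    ⟨(a + min u b) / 2, by linarith [lt_min hu hab], by linarith [min_le_left u b, lt_min hu hab],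
      by linarith [min_le_right u b, lt_min hu hab]⟩
  have hgc : g a < g c := (hsub ⟨hac, hcu⟩).2
  refine mem_of_superset (Ioo_mem_nhdsGT hgc) fun y hy => ?_
  obtain ⟨s, hs, rfl⟩ := intermediate_value_Ioo hac.le (hg.mono (Icc_subset_Icc_right hcb)) hy
  exact (hsub ⟨hs.1, hs.2.trans hcu⟩).1

theorem free_energy_critical_behavior_general
    (w γ : ℝ) (F ψ L : ℝ → ℝ)
    (hw1 : 1 < w)
    (hψcont : ContinuousOn ψ (Ici 0))
    (hψrange : ∀ s : ℝ, 0 ≤ s → 1 ≤ ψ s)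
    (hψ0 : Tendsto (fun s : ℝ => (ψ s - 1 - s) / s) (nhdsWithin 0 (Ioi 0)) (nhds 0))
    (hL : ∀ s : ℝ, 0 < s → L (Real.log s) = s ^ (-γ) * F (Real.log (ψ s)))
    (hLcont : Continuous L)
    (hLper : ∀ t : ℝ, L (t + Real.log w) = L t)
    (hLpos : ∀ t : ℝ, 0 < L t) :
    Tendsto (fun h : ℝ => F h / (h ^ γ * L (Real.log h)))
      (nhdsWithin 0 (Ioi 0)) (nhds 1) := by
  have hs : ∀ᶠ s : ℝ in 𝓝[>] 0, 0 < s := self_mem_nhdsWithin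
  have hψ_sub_one : (fun s => ψ s - 1) ~[𝓝[>] 0] id :=
    (isLittleO_iff_tendsto' (hs.mono fun s hs h => absurd h hs.ne')).mpr hψ0
  have hψ_one : Tendsto ψ (𝓝[>] 0) (𝓝 1) :=
    tendsto_sub_nhds_zero_iff.mp (hψ_sub_one.symm.tendsto_nhds
      (tendsto_id.mono_left nhdsWithin_le_nhds))
  set g := fun s => Real.log (ψ s)
  have hg : g ~[𝓝[>] 0] id := (Real.isEquivalent_log_of_tendsto_one hψ_one).trans hψ_sub_one
  have hg_pos : ∀ᶠ s in 𝓝[>] 0, 0 < g s := hg.eventually_pos hs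
  have hψ_zero : ψ 0 = 1 :=
    tendsto_nhds_unique ((hψcont 0 self_mem_Ici).mono Ioi_subset_Ici_self) hψ_one
  have hg_zero : g 0 = 0 := by simp only [g, hψ_zero, Real.log_one]
  have hg_cont : ContinuousOn g (Icc 0 1) :=
    (hψcont.mono Icc_subset_Ici_self).log fun s hs => by linarith [hψrange s hs.1]
  have hle : 𝓝[>] 0 ≤ map g (𝓝[>] 0) := by
    simpa only [hg_zero] using
      nhdsGT_le_map_of_continuousOn one_pos hg_cont (by simpa only [hg_zero] using hg_pos)
  suffices key : Tendsto (fun s => F (g s) / (g s ^ γ * L (Real.log (g s)))) (𝓝[>] 0) (𝓝 1) from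
    (tendsto_map'_iff.mpr key).mono_left hle
  have hratio : Tendsto (fun s => s / g s) (𝓝[>] 0) (𝓝 1) :=
    (isEquivalent_iff_tendsto_one (hg_pos.mono fun s h => h.ne')).mp hg.symm
  have hlog_sub : Tendsto (fun s => Real.log s - Real.log (g s)) (𝓝[>] 0) (𝓝 0) := by
    refine (Real.log_one ▸ hratio.log one_ne_zero).congr' ?_
    filter_upwards [hs, hg_pos] with s hs hgs using Real.log_div hs.ne' hgs.ne'
  have hL_per : Function.Periodic L (Real.log w) := hLper
  have hL_ratio :=
    hL_per.tendsto_div_comp_of_tendsto_sub (Real.log_pos hw1).ne' hLcont hLpos hlog_sub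
  have hlim := (hratio.rpow_const (p := γ) (Or.inl one_ne_zero)).mul hL_ratio
  rw [Real.one_rpow, one_mul] at hlim
  refine hlim.congr' ?_
  filter_upwards [hs, hg_pos] with s hs hgs
  have hF : F (g s) = s ^ γ * L (Real.log s) := by
    rw [hL s hs, ← mul_assoc, ← Real.rpow_add hs, add_neg_cancel, Real.rpow_zero, one_mul]
  rw [hF, Real.div_rpow hs.le hgs.le, mul_div_mul_comm]

theorem free_energy_critical_behavior
    (d : ℕ) (p : ℕ → ℝ) (f : ℝ → ℝ) (w γ : ℝ) (F ψ L : ℝ → ℝ)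
    (hd : 2 ≤ d)
    (hp : ∀ i, i ≤ d → 0 ≤ p i)
    (hsum : ∑ i ∈ Finset.range (d + 1), p i = 1)
    (hpd : 0 < p d)
    (hf : ∀ x, f x = ∑ i ∈ Finset.range (d + 1), p i * x ^ i)
    (hw : w = ∑ i ∈ Finset.range (d + 1), (i : ℝ) * p i)
    (hw1 : 1 < w)
    (hγ : γ = Real.log d / Real.log w)
    (hF : ∀ h : ℝ, 0 < h →
      Tendsto (fun n : ℕ => (d : ℝ) ^ (-(n : ℤ)) * Real.log (f^[n] (Real.exp h)))
        atTop (nhds (F h)))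
    (hψcont : ContinuousOn ψ (Ici 0))
    (hψmono : StrictMonoOn ψ (Ici 0))
    (hψrange : ∀ s : ℝ, 0 ≤ s → 1 ≤ ψ s)
    (hPoincare : ∀ s : ℝ, 0 ≤ s → ψ (w * s) = f (ψ s))
    (hψ0 : Tendsto (fun s : ℝ => (ψ s - 1 - s) / s) (nhdsWithin 0 (Ioi 0)) (nhds 0))
    (hL : ∀ s : ℝ, 0 < s → L (Real.log s) = s ^ (-γ) * F (Real.log (ψ s)))
    (hLcont : Continuous L)
    (hLper : ∀ t : ℝ, L (t + Real.log w) = L t)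
    (hLpos : ∀ t : ℝ, 0 < L t) :
    Tendsto (fun h : ℝ => F h / (h ^ γ * L (Real.log h)))
      (nhdsWithin 0 (Ioi 0)) (nhds 1) :=
  free_energy_critical_behavior_general w γ F ψ L hw1 hψcont hψrange hψ0 hL hLcont hLper hLpos
end

section
/- With q(x) := -1/l(x) where l(x) = p_0/(2-w) - x p_2/(2-w), one has q ∘ f = 𝚏 ∘ q on the domain where both sides are defined, where 𝚏(y) = y²/(λ(1+y)) and λ = 2-w; moreover q(1) = λ/(1-λ). -/
theorem conjugation_q_f
    (p₀ p₁ p₂ w lam : ℝ) (f l q F : ℝ → ℝ)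
    (h0 : 0 ≤ p₀) (h1 : 0 ≤ p₁) (h2 : 0 < p₂)
    (hsum : p₀ + p₁ + p₂ = 1)
    (hw : w = p₁ + 2 * p₂)
    (hw1 : 1 < w) (hw2 : w < 2)
    (hlam : lam = 2 - w)
    (hf : ∀ x, f x = p₀ + p₁ * x + p₂ * x ^ 2)
    (hl : ∀ x, l x = p₀ / (2 - w) - x * p₂ / (2 - w))
    (hq : ∀ x, l x ≠ 0 → q x = -1 / l x)
    (hF : ∀ y : ℝ, y ≠ -1 → F y = y ^ 2 / (lam * (1 + y))) :
    (∀ x : ℝ, l x ≠ 0 → l (f x) ≠ 0 → q x ≠ -1 → q (f x) = F (q x)) ∧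
    q 1 = lam / (1 - lam) := by
  have hw2' : (2 : ℝ) - w ≠ 0 := by linarith
  have hp1 : p₁ = w - 2 * p₂ := by linarith
  have hp0 : p₀ = 1 - w + p₂ := by linarith
  constructor
  · intro x hlx hlfx hqx
    have hqxv := hq x hlx
    have hqfx := hq (f x) hlfx
    have hl1 : l x ≠ 1 := by
      intro h
      apply hqx
      rw [hqxv, h]
      norm_num
    have hFv := hF (q x) hqx
    rw [hqfx, hFv, hqxv]
    have key : l (f x) = (2 - w) * l x * (1 - l x) := by
      rw [hl, hl, hf, hp0, hp1]
      field_simp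
      ring
    rw [key, hlam]
    have h1l : (1 : ℝ) - l x ≠ 0 := fun h => hl1 (by linarith)
    have hden : (2 - w) * l x * (1 - l x) ≠ 0 :=
      mul_ne_zero (mul_ne_zero hw2' hlx) h1l
    have hden2 : (2 - w) * (1 + -1 / l x) ≠ 0 := by
      apply mul_ne_zero hw2'
      intro h
      apply hl1
      field_simp at h
      linarith
    rw [div_eq_div_iff hden hden2]
    field_simp
    ring
  · have hl1 : l 1 = (1 - w) / (2 - w) := by
      rw [hl]
      field_simp
      linarith
    have hlne : l 1 ≠ 0 := by
      rw [hl1]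
      intro h
      rcases div_eq_zero_iff.mp h with h' | h' <;> [linarith; exact hw2' h']
    rw [hq 1 hlne, hl1, hlam]
    have hne : (1:ℝ) - w ≠ 0 := by intro h; linarith
    have hne2 : (1:ℝ) - (2 - w) ≠ 0 := by intro h; linarith
    field_simp
    ring
end

section
/- With β(x) = x^{1/γ} ω(log x) a bijection of (0,∞) and α(log y) = β^{-1}(y)/y^γ, the inversion identity α((1/γ) log x + log ω(log x)) = ω(log x)^{-γ} holds for all x > 0. In particular, if ω is nonconstant then α is nonconstant. -/
open Set

theorem alpha_inversion_identity
    (γ : ℝ) (ω β βinv α : ℝ → ℝ)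
    (hγ : 1 < γ)
    (hωcont : Continuous ω)
    (hωpos : ∀ t : ℝ, 0 < ω t)
    (hβ : ∀ x : ℝ, 0 < x → β x = x ^ (1 / γ) * ω (Real.log x))
    (hβbij : BijOn β (Ioi 0) (Ioi 0))
    (hβinv : (∀ x ∈ Ioi (0:ℝ), βinv (β x) = x) ∧ ∀ y ∈ Ioi (0:ℝ), β (βinv y) = y)
    (hα : ∀ y : ℝ, 0 < y → α (Real.log y) = βinv y / y ^ γ) :
    (∀ x : ℝ, 0 < x →
      α ((1 / γ) * Real.log x + Real.log (ω (Real.log x))) = ω (Real.log x) ^ (-γ)) ∧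
    ((∃ s t : ℝ, ω s ≠ ω t) → ∃ s t : ℝ, α s ≠ α t) := by
  have hγ0 : γ ≠ 0 := by linarith
  have main : ∀ x : ℝ, 0 < x →
      α ((1 / γ) * Real.log x + Real.log (ω (Real.log x))) = ω (Real.log x) ^ (-γ) := by
    intro x hx
    set w := ω (Real.log x) with hw
    have hwpos : 0 < w := hωpos _
    have hy : β x ∈ Ioi (0:ℝ) := hβbij.mapsTo hx
    have hypos : (0:ℝ) < β x := hy
    have hβx : β x = x ^ (1 / γ) * w := hβ x hx
    have hlog : Real.log (β x) = (1 / γ) * Real.log x + Real.log w := by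
      rw [hβx, Real.log_mul (ne_of_gt (Real.rpow_pos_of_pos hx _)) (ne_of_gt hwpos),
        Real.log_rpow hx]
    have hpow : (β x) ^ γ = x * w ^ γ := by
      rw [hβx, Real.mul_rpow (le_of_lt (Real.rpow_pos_of_pos hx _)) (le_of_lt hwpos),
        ← Real.rpow_mul (le_of_lt hx), one_div_mul_cancel hγ0, Real.rpow_one]
    have := hα (β x) hypos
    rw [hβinv.1 x hx, hpow] at this
    rw [← hlog, this, Real.rpow_neg (le_of_lt hwpos)]
    field_simp
  refine ⟨main, ?_⟩
  rintro ⟨s, t, hst⟩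
  refine ⟨(1 / γ) * s + Real.log (ω s), (1 / γ) * t + Real.log (ω t), ?_⟩
  have hs := main (Real.exp s) (Real.exp_pos s)
  have ht := main (Real.exp t) (Real.exp_pos t)
  rw [Real.log_exp] at hs ht
  rw [hs, ht]
  intro h
  exact hst (Real.rpow_left_injOn (neg_ne_zero.mpr hγ0)
    (le_of_lt (hωpos s)) (le_of_lt (hωpos t)) h)
end

section
/- If A(y) = wy + λy² with w ∈ (1,2), λ = 2-w, then there is a unique formal power series g(y) = y + Σ_{k≥2} g_k y^k satisfying g(wy) = A(g(y)); its coefficients satisfy g_2 = λ/((w-1)w) and all g_k are nonnegative. -/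
/-!
Comparing coefficients of `y ^ (n + 2)` in `g (w y) = w g(y) + λ g(y)²` gives
`(w ^ (n + 2) - w) g_{n+2} = λ ∑_{i + j = n} g_{i+1} g_{j+1}`, whose right-hand side only involves
coefficients of lower index. Since `w ^ (n + 2) ≠ w` for `w > 1`, this recursion determines `g`
from `g_0 = 0`, `g_1 = 1`, and it preserves nonnegativity because `λ ≥ 0` and `w ^ (n + 2) > w`.
-/

open PowerSeries Finset

section CommRing
variable {R : Type*} [CommRing R]

lemma coeff_add_two_sq {g : R⟦X⟧} (hg : coeff 0 g = 0) (n : ℕ) :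
    coeff (n + 2) (g ^ 2) = ∑ p ∈ antidiagonal n, coeff (p.1 + 1) g * coeff (p.2 + 1) g := by
  obtain ⟨h, rfl⟩ : X ∣ g := X_dvd_iff.mpr (by simpa using hg)
  rw [mul_pow, coeff_X_pow_mul, pow_two, coeff_mul]
  simp only [coeff_succ_X_mul]

lemma rescale_eq_iff_coeff_add_two {w lam : R} {g : R⟦X⟧} (hg : coeff 0 g = 0) :
    rescale w g = C w * g + C lam * g ^ 2 ↔ ∀ n, w ^ (n + 2) * coeff (n + 2) g =
      w * coeff (n + 2) g + lam * ∑ p ∈ antidiagonal n, coeff (p.1 + 1) g * coeff (p.2 + 1) g := by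
  simp only [PowerSeries.ext_iff, coeff_rescale, map_add, coeff_C_mul]
  refine ⟨fun h n => coeff_add_two_sq hg n ▸ h (n + 2), fun h n => ?_⟩
  have hg₀ : constantCoeff g = 0 := by simpa using hg
  rcases n with _ | _ | n
  · simp [hg₀]
  · simp [pow_two, coeff_mul, Nat.antidiagonal_succ, hg₀]
  · rw [coeff_add_two_sq hg, h]

lemma eq_of_rescale_eq [IsDomain R] {w lam : R} (hw : ∀ n, w ^ (n + 2) ≠ w) {g g' : R⟦X⟧}
    (h0 : coeff 0 g = 0) (h0' : coeff 0 g' = 0) (h1 : coeff 1 g = coeff 1 g')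
    (hg : rescale w g = C w * g + C lam * g ^ 2)
    (hg' : rescale w g' = C w * g' + C lam * g' ^ 2) : g = g' := by
  rw [rescale_eq_iff_coeff_add_two h0] at hg
  rw [rescale_eq_iff_coeff_add_two h0'] at hg'
  ext n
  induction n using Nat.strong_induction_on with
  | _ n ih =>
    rcases n with _ | _ | n
    · rw [h0, h0']
    · exact h1
    · have hsum : ∑ p ∈ antidiagonal n, coeff (p.1 + 1) g * coeff (p.2 + 1) g =
          ∑ p ∈ antidiagonal n, coeff (p.1 + 1) g' * coeff (p.2 + 1) g' := by
        refine sum_congr rfl fun p hp => ?_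
        have := mem_antidiagonal.mp hp
        rw [ih (p.1 + 1) (by omega), ih (p.2 + 1) (by omega)]
      refine mul_left_cancel₀ (sub_ne_zero.mpr (hw n)) ?_
      linear_combination hg n - hg' n + lam * hsum

end CommRing

section Field
variable {K : Type*} [Field K]

noncomputable def schroderCoeff (w lam : K) : ℕ → K
  | 0 => 0
  | 1 => 1
  | n + 2 => lam / (w ^ (n + 2) - w) *
      ∑ i : Fin (n + 1), schroderCoeff w lam (i + 1) * schroderCoeff w lam (n - i + 1)
decreasing_by all_goals omega

@[simp] lemma schroderCoeff_zero (w lam : K) : schroderCoeff w lam 0 = 0 := by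
  rw [schroderCoeff]

@[simp] lemma schroderCoeff_one (w lam : K) : schroderCoeff w lam 1 = 1 := by
  rw [schroderCoeff]

lemma schroderCoeff_add_two (w lam : K) (n : ℕ) :
    schroderCoeff w lam (n + 2) = lam / (w ^ (n + 2) - w) *
      ∑ p ∈ antidiagonal n, schroderCoeff w lam (p.1 + 1) * schroderCoeff w lam (p.2 + 1) := by
  rw [schroderCoeff, Nat.sum_antidiagonal_eq_sum_range_succ_mk,
    Fin.sum_univ_eq_sum_range (fun i => schroderCoeff w lam (i + 1) * schroderCoeff w lam (n - i + 1))]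

lemma schroderCoeff_two (w lam : K) : schroderCoeff w lam 2 = lam / ((w - 1) * w) := by
  rw [schroderCoeff_add_two, Nat.antidiagonal_zero, sum_singleton, schroderCoeff_one, mul_one]
  ring

noncomputable def schroderSeries (w lam : K) : K⟦X⟧ := mk (schroderCoeff w lam)

@[simp] lemma coeff_schroderSeries (w lam : K) (n : ℕ) :
    coeff n (schroderSeries w lam) = schroderCoeff w lam n := coeff_mk n _

lemma rescale_schroderSeries {w : K} (lam : K) (hw : ∀ n, w ^ (n + 2) ≠ w) :
    rescale w (schroderSeries w lam) =
      C w * schroderSeries w lam + C lam * schroderSeries w lam ^ 2 := by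
  rw [rescale_eq_iff_coeff_add_two (by simp)]
  intro n
  have := sub_ne_zero.mpr (hw n)
  simp only [coeff_schroderSeries, schroderCoeff_add_two]
  field_simp
  ring

lemma schroderCoeff_nonneg [LinearOrder K] [IsStrictOrderedRing K] {w lam : K} (hw : 1 < w)
    (hlam : 0 ≤ lam) (n : ℕ) : 0 ≤ schroderCoeff w lam n := by
  induction n using Nat.strong_induction_on with
  | _ n ih =>
    rcases n with _ | _ | n
    · simp
    · simp
    · rw [schroderCoeff_add_two]
      refine mul_nonneg (div_nonneg hlam (sub_nonneg.mpr (lt_self_pow₀ hw (by omega)).le))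
        (sum_nonneg fun p hp => ?_)
      have := mem_antidiagonal.mp hp
      exact mul_nonneg (ih _ (by omega)) (ih _ (by omega))

end Field

theorem poincare_power_series_unique
    (w lam : ℝ)
    (hw1 : 1 < w) (hw2 : w < 2)
    (hlam : lam = 2 - w) :
    (∃! g : PowerSeries ℝ,
      coeff 0 g = 0 ∧ coeff 1 g = 1 ∧
      rescale w g = C w * g + C lam * g ^ 2) ∧
    (∀ g : PowerSeries ℝ,
      coeff 0 g = 0 → coeff 1 g = 1 →
      rescale w g = C w * g + C lam * g ^ 2 →
      coeff 2 g = lam / ((w - 1) * w) ∧ ∀ k : ℕ, 0 ≤ coeff k g) := by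
  have hw : ∀ n, w ^ (n + 2) ≠ w := fun n => (lt_self_pow₀ hw1 (by omega)).ne'
  have hS := rescale_schroderSeries lam hw
  have eq_schroderSeries : ∀ g : PowerSeries ℝ, coeff 0 g = 0 → coeff 1 g = 1 →
      rescale w g = C w * g + C lam * g ^ 2 → g = schroderSeries w lam :=
    fun g h0 h1 hg => eq_of_rescale_eq hw h0 (by simp) (by simp [h1]) hg hS
  refine ⟨⟨schroderSeries w lam, ⟨by simp, by simp, hS⟩,
    fun g ⟨h0, h1, hg⟩ => eq_schroderSeries g h0 h1 hg⟩, fun g h0 h1 hg => ?_⟩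
  obtain rfl := eq_schroderSeries g h0 h1 hg
  simpa [schroderCoeff_two] using schroderCoeff_nonneg hw1 (by linarith)
end
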